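/- The class function E on a finite group H defined by E(z) = #{(a_1,b_1,...,a_g,b_g) ∈ H^{2g} : [a_1,b_1]···[a_g,b_g] = z} satisfies E(z) = Σ_{χ ∈ Irr(H)} (|H|^{2g-1}/χ(1)^{2g-1}) χ(z). -/

import Mathlib

/-!
STATEMENT 2: For a finite group `H` and `g ≥ 1`, the function
`E(z) = #{(a₁,b₁,…,a_g,b_g) ∈ H^{2g} : [a₁,b₁]⋯[a_g,b_g] = z}` satisfies
`E(z) = Σ_{χ ∈ Irr(H)} (|H|^{2g-1} / χ(1)^{2g-1}) · χ(z)`.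

Irreducible characters are encoded by a finite family `V : ι → FDRep ℂ H` of pairwise
non-isomorphic irreducible representations containing every irreducible representation
up to isomorphism.
-/

open CategoryTheory

noncomputable section

/-- the commutator `[a, b] = a b a⁻¹ b⁻¹` -/
def commutator' {H : Type*} [Group H] (a b : H) : H := a * b * a⁻¹ * b⁻¹

open LinearMap Module

namespace Frob
variable {H : Type} [Group H] [Fintype H]
set_option linter.unusedSectionVars false
set_option maxHeartbeats 1000000

theorem char_one_ne_zero (V : FDRep ℂ H) [Simple V] : V.character 1 ≠ 0 := by
  rw [FDRep.char_one]
  norm_cast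
  intro h
  have hs : Subsingleton V := finrank_zero_iff.mp h
  refine id_nonzero V ?_
  apply Action.hom_ext
  ext v
  exact hs.elim _ _

theorem schur_scalar (V : FDRep ℂ H) [Simple V] (u : V →ₗ[ℂ] V)
    (hu : ∀ h : H, u ∘ₗ V.ρ h = (V.ρ h : V →ₗ[ℂ] V) ∘ₗ u) :
    u = (LinearMap.trace ℂ V u / V.character 1) • LinearMap.id := by
  classical
  set φ : V ⟶ V := ⟨FGModuleCat.ofHom u, fun h => by ext v; exact congrFun (congrArg _ (hu h)) v⟩ with hφ
  have h1 : finrank ℂ (V ⟶ V) = 1 := by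
    rw [FDRep.finrank_hom_simple_simple V V, if_pos ⟨Iso.refl V⟩]
  obtain ⟨c, hc⟩ := (finrank_eq_one_iff_of_nonzero' (𝟙 V) (id_nonzero V)).mp h1 φ
  have hc' : u = c • LinearMap.id := (congrArg (fun m => m.hom.hom.hom) hc).symm
  have htr : LinearMap.trace ℂ V u = c * V.character 1 := by
    rw [hc', map_smul, FDRep.char_one]
    simp [mul_comm]
  rw [htr, mul_div_assoc, div_self (char_one_ne_zero V), mul_one]
  exact hc'

theorem schur_trace (V : FDRep ℂ H) [Simple V] (u : V →ₗ[ℂ] V)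
    (hu : ∀ h : H, u ∘ₗ V.ρ h = (V.ρ h : V →ₗ[ℂ] V) ∘ₗ u) (y : H) :
    LinearMap.trace ℂ V (u ∘ₗ V.ρ y)
      = (LinearMap.trace ℂ V u / V.character 1) * V.character y := by
  conv_lhs => rw [schur_scalar V u hu]
  rw [LinearMap.smul_comp, map_smul]
  rfl

theorem char_mul (V : FDRep ℂ H) (a b : H) :
    V.character (a * b) = LinearMap.trace ℂ V ((V.ρ a : V →ₗ[ℂ] V) * V.ρ b) := by
  rw [FDRep.character, map_mul]

theorem char_self_sum (V : FDRep ℂ H) [Simple V] :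
    ∑ g : H, V.character g * V.character g⁻¹ = (Fintype.card H : ℂ) := by
  classical
  letI : Invertible ((Fintype.card H : ℂ)) :=
    invertibleOfNonzero (by exact_mod_cast Fintype.card_ne_zero)
  have h := FDRep.char_orthonormal (G := H) V V
  rw [Nat.card_eq_fintype_card] at h
  rw [if_pos ⟨Iso.refl V⟩] at h
  have hn : (Fintype.card H : ℂ) ≠ 0 := by exact_mod_cast Fintype.card_ne_zero
  have h' : (Fintype.card H : ℂ)⁻¹ * ∑ g : H, V.character g * V.character g⁻¹ = 1 := by
    exact h
  field_simp at h'
  simpa [one_div] using h'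

theorem conj_sum_comm (V : FDRep ℂ H) (x h : H) :
    (∑ a : H, (V.ρ (a * x * a⁻¹) : V →ₗ[ℂ] V)) ∘ₗ V.ρ h
      = (V.ρ h : V →ₗ[ℂ] V) ∘ₗ ∑ a : H, (V.ρ (a * x * a⁻¹) : V →ₗ[ℂ] V) := by
  rw [← Module.End.mul_eq_comp, ← Module.End.mul_eq_comp, Finset.sum_mul, Finset.mul_sum]
  refine Fintype.sum_equiv (Equiv.mulLeft h⁻¹) _ _ fun a => ?_
  rw [← map_mul, ← map_mul]
  congr 1
  simp only [Equiv.coe_mulLeft]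
  group

theorem conj_sum_trace (V : FDRep ℂ H) (x : H) :
    LinearMap.trace ℂ V (∑ a : H, (V.ρ (a * x * a⁻¹) : V →ₗ[ℂ] V))
      = (Fintype.card H : ℂ) * V.character x := by
  calc LinearMap.trace ℂ V (∑ a : H, (V.ρ (a * x * a⁻¹) : V →ₗ[ℂ] V))
      = ∑ a : H, V.character (a * x * a⁻¹) := map_sum _ _ _
    _ = ∑ _a : H, V.character x := Finset.sum_congr rfl fun a _ => FDRep.char_conj V x a
    _ = (Fintype.card H : ℂ) * V.character x := by
        rw [Finset.sum_const, Finset.card_univ, nsmul_eq_mul]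

theorem step1 (V : FDRep ℂ H) [Simple V] (b y : H) :
    ∑ a : H, V.character (a * b * a⁻¹ * y)
      = (Fintype.card H : ℂ) * V.character b / V.character 1 * V.character y := by
  have hcomm := fun h => conj_sum_comm V b h
  have key := schur_trace V _ hcomm y
  rw [conj_sum_trace] at key
  rw [← key, ← Module.End.mul_eq_comp, Finset.sum_mul, map_sum]
  exact Finset.sum_congr rfl fun a _ => char_mul V (a * b * a⁻¹) y

theorem char_smul_comm (V : FDRep ℂ H) (h : H) :
    (∑ b : H, V.character b • (V.ρ b⁻¹ : V →ₗ[ℂ] V)) ∘ₗ V.ρ h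
      = (V.ρ h : V →ₗ[ℂ] V) ∘ₗ ∑ b : H, V.character b • (V.ρ b⁻¹ : V →ₗ[ℂ] V) := by
  rw [← Module.End.mul_eq_comp, ← Module.End.mul_eq_comp, Finset.sum_mul, Finset.mul_sum]
  refine Fintype.sum_equiv ((Equiv.mulLeft h⁻¹).trans (Equiv.mulRight h)) _ _ fun b => ?_
  simp only [Equiv.trans_apply, Equiv.coe_mulLeft, Equiv.coe_mulRight]
  rw [smul_mul_assoc, mul_smul_comm]
  congr 1
  · rw [show h⁻¹ * b * h = h⁻¹ * b * h⁻¹⁻¹ by rw [inv_inv], FDRep.char_conj]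
  · rw [← map_mul, ← map_mul]
    congr 1
    group

theorem step2 (V : FDRep ℂ H) [Simple V] (y : H) :
    ∑ b : H, V.character b * V.character (b⁻¹ * y)
      = (Fintype.card H : ℂ) / V.character 1 * V.character y := by
  have hcomm := fun h => char_smul_comm V h
  have key := schur_trace V _ hcomm y
  have htr : LinearMap.trace ℂ V (∑ b : H, V.character b • (V.ρ b⁻¹ : V →ₗ[ℂ] V))
      = (Fintype.card H : ℂ) := by
    rw [map_sum, ← char_self_sum V]
    exact Finset.sum_congr rfl fun b _ => by rw [map_smul, smul_eq_mul]; rfl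
  rw [htr] at key
  rw [← key, ← Module.End.mul_eq_comp, Finset.sum_mul, map_sum]
  refine Finset.sum_congr rfl fun b _ => ?_
  rw [char_mul, smul_mul_assoc, map_smul, smul_eq_mul]

theorem comm_sum (V : FDRep ℂ H) [Simple V] (y : H) :
    ∑ a : H, ∑ b : H, V.character (y * (a * b * a⁻¹ * b⁻¹))
      = ((Fintype.card H : ℂ) / V.character 1) ^ 2 * V.character y := by
  rw [Finset.sum_comm]
  have h1 : ∀ b : H, ∑ a : H, V.character (y * (a * b * a⁻¹ * b⁻¹))
      = (Fintype.card H : ℂ) * V.character b / V.character 1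
          * V.character (b⁻¹ * y) := by
    intro b
    rw [← step1 V b (b⁻¹ * y)]
    refine Finset.sum_congr rfl fun a _ => ?_
    rw [FDRep.char_mul_comm]
    congr 1
    group
  simp only [h1]
  have h2 : ∀ b : H, (Fintype.card H : ℂ) * V.character b / V.character 1
        * V.character (b⁻¹ * y)
      = ((Fintype.card H : ℂ) / V.character 1)
          * (V.character b * V.character (b⁻¹ * y)) := fun b => by ring
  simp only [h2]
  rw [← Finset.mul_sum, step2 V y]
  ring

/-- the equiv splitting off the first entries of a pair of tuples -/
def splitEquiv (g : ℕ) :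
    (((Fin g → H) × (Fin g → H)) × (H × H)) ≃ ((Fin (g+1) → H) × (Fin (g+1) → H)) where
  toFun q := (Fin.cons q.2.1 q.1.1, Fin.cons q.2.2 q.1.2)
  invFun t := ((fun j => t.1 j.succ, fun j => t.2 j.succ), (t.1 0, t.2 0))
  left_inv q := by
    obtain ⟨⟨a, b⟩, ⟨x, u⟩⟩ := q
    simp
  right_inv t := by
    obtain ⟨a, b⟩ := t
    refine Prod.ext ?_ ?_ <;> · dsimp; funext j; induction j using Fin.cases <;> simp

theorem tuple_sum (V : FDRep ℂ H) [Simple V] : ∀ (g : ℕ) (y : H),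
    ∑ t : (Fin g → H) × (Fin g → H),
        V.character (y * ((List.ofFn fun j => commutator' (t.1 j) (t.2 j)).prod)⁻¹)
      = ((Fintype.card H : ℂ) / V.character 1) ^ (2 * g) * V.character y := by
  intro g
  induction g with
  | zero => intro y; simp
  | succ g ih =>
      intro y
      rw [← (splitEquiv g).sum_comp (fun t : (Fin (g+1) → H) × (Fin (g+1) → H) =>
        V.character (y * ((List.ofFn fun j => commutator' (t.1 j) (t.2 j)).prod)⁻¹))]
      rw [Fintype.sum_prod_type]
      have inner : ∀ w : (Fin g → H) × (Fin g → H),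
          (∑ xu : H × H, V.character (y *
            ((List.ofFn fun j => commutator' (((splitEquiv g) (w, xu)).1 j)
              (((splitEquiv g) (w, xu)).2 j)).prod)⁻¹))
          = ((Fintype.card H : ℂ) / V.character 1) ^ 2 *
              V.character (y * ((List.ofFn fun j => commutator' (w.1 j) (w.2 j)).prod)⁻¹) := by
        intro w
        rw [Fintype.sum_prod_type, Finset.sum_comm, ← comm_sum V
          (y * ((List.ofFn fun j => commutator' (w.1 j) (w.2 j)).prod)⁻¹)]
        refine Finset.sum_congr rfl fun u _ => Finset.sum_congr rfl fun x _ => ?_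
        congr 1
        show y * ((List.ofFn fun j => commutator'
            (Fin.cons x w.1 j) (Fin.cons u w.2 j)).prod)⁻¹ = _
        rw [List.ofFn_succ]
        simp only [Fin.cons_zero, Fin.cons_succ, List.prod_cons, commutator', mul_inv_rev]
        group
      simp only [inner]
      rw [← Finset.mul_sum, ih y, show 2 * (g + 1) = 2 + 2 * g by ring, pow_add]
      ring

/-- the canonical basis of the monoid algebra -/
def myBasis : Basis H ℂ (MonoidAlgebra ℂ H) :=
  Basis.ofRepr (MonoidAlgebra.coeffLinearEquiv ℂ)

/-- left multiplication by the image of `x` as a `ℂ`-linear endomorphism -/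
def Lmul (x : H) : MonoidAlgebra ℂ H →ₗ[ℂ] MonoidAlgebra ℂ H :=
  LinearMap.mulLeft ℂ (MonoidAlgebra.of ℂ H x)

open scoped Classical in
theorem trace_Lmul (x : H) :
    LinearMap.trace ℂ (MonoidAlgebra ℂ H) (Lmul x)
      = if x = 1 then (Fintype.card H : ℂ) else 0 := by
  rw [LinearMap.trace_eq_matrix_trace ℂ (myBasis (H := H))]
  rw [Matrix.trace]
  have hdiag : ∀ h : H, (LinearMap.toMatrix myBasis myBasis (Lmul x)).diag h
      = if x = 1 then (1 : ℂ) else 0 := by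
    intro h
    rw [Matrix.diag_apply, LinearMap.toMatrix_apply]
    have hb : (myBasis (H := H)) h = MonoidAlgebra.single h 1 := by
      rw [myBasis, Basis.coe_ofRepr]
      rfl
    rw [hb]
    have : (Lmul x) (MonoidAlgebra.single h 1) = MonoidAlgebra.single (x * h) 1 := by
      show MonoidAlgebra.of ℂ H x * MonoidAlgebra.single h 1 = _
      rw [MonoidAlgebra.of_apply, MonoidAlgebra.single_mul_single, one_mul]
    rw [this]
    show (MonoidAlgebra.single (x * h) (1 : ℂ)).coeff h = _
    rw [MonoidAlgebra.coeff_single_apply]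
    congr 1
    simp [mul_eq_right, eq_comm]
  simp only [hdiag]
  simp [Finset.sum_const, Finset.card_univ]

/-- A nontrivial representation with no proper invariant subspaces is simple. -/
theorem simple_of_irreducible (X : FDRep ℂ H) (hnt : Nontrivial X)
    (hirr : ∀ q : Submodule ℂ X, (∀ (h : H), ∀ v ∈ q, X.ρ h v ∈ q) → q = ⊥ ∨ q = ⊤) :
    Simple X := by
  constructor
  intro Y f hf
  constructor
  · -- IsIso f → f ≠ 0
    intro hiso h0
    obtain ⟨x, y, hxy⟩ := hnt
    apply hxy
    have h1 : 𝟙 X = (0 : X ⟶ X) := by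
      calc 𝟙 X = inv f ≫ f := (IsIso.inv_hom_id f).symm
        _ = inv f ≫ (0 : Y ⟶ X) := by rw [← h0]
        _ = 0 := Limits.comp_zero
    have hx := congrFun (congrArg (fun (m : X ⟶ X) => ((m.hom.hom.hom : X →ₗ[ℂ] X) : X → X)) h1) x
    have hy := congrFun (congrArg (fun (m : X ⟶ X) => ((m.hom.hom.hom : X →ₗ[ℂ] X) : X → X)) h1) y
    calc x = (0 : X ⟶ X).hom.hom.hom x := hx
      _ = y := hy.symm
  · -- f ≠ 0 → IsIso f
    intro hne
    set φ : Y →ₗ[ℂ] X := f.hom.hom.hom with hφ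
    have hcomm : ∀ (h : H) (v : Y), φ (Y.ρ h v) = X.ρ h (φ v) := by
      intro h v
      have := f.comm h
      exact congrFun (congrArg (fun (m : Y.V ⟶ X.V) => (m.hom.hom : Y → X)) this) v
    -- kernel is an invariant subspace of Y, giving a subrepresentation
    have hker : LinearMap.ker φ = ⊥ := by
      by_contra hk
      have hmapsto : ∀ h : H, ∀ v ∈ LinearMap.ker φ, (Y.ρ h : Y →ₗ[ℂ] Y) v ∈ LinearMap.ker φ := by
        intro h v hv
        rw [LinearMap.mem_ker] at hv ⊢
        rw [hcomm h v, hv, map_zero]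
      set ρK : Representation ℂ H ↥(LinearMap.ker φ) :=
        { toFun := fun h => (Y.ρ h : Y →ₗ[ℂ] Y).restrict (fun v hv => hmapsto h v hv)
          map_one' := by
            apply LinearMap.ext; intro v; apply Subtype.ext
            show (Y.ρ 1 : Y →ₗ[ℂ] Y) v.1 = v.1
            rw [map_one]; rfl
          map_mul' := fun a b => by
            apply LinearMap.ext; intro v; apply Subtype.ext
            show (Y.ρ (a * b) : Y →ₗ[ℂ] Y) v.1 = (Y.ρ a : Y →ₗ[ℂ] Y) ((Y.ρ b : Y →ₗ[ℂ] Y) v.1)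
            rw [map_mul]; rfl } with hρK
      set K : FDRep ℂ H := FDRep.of ρK with hK
      set ι : K ⟶ Y := ⟨FGModuleCat.ofHom (LinearMap.ker φ).subtype, fun h => rfl⟩ with hι
      have hcomp : ι ≫ f = (0 : K ⟶ Y) ≫ f := by
        apply Action.hom_ext
        ext v
        show φ (v.1) = φ ((0 : K →ₗ[ℂ] Y) v)
        rw [LinearMap.mem_ker.mp v.2]
        simp
      have hι0 : ι = 0 := (cancel_mono f).mp hcomp
      apply hk
      rw [Submodule.eq_bot_iff]
      intro v hv
      have := congrFun (congrArg (fun (m : K ⟶ Y) => ((m.hom.hom.hom : K →ₗ[ℂ] Y) : K → Y)) hι0) ⟨v, hv⟩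
      exact this
    -- range is an invariant subspace of X
    have hrange : LinearMap.range φ = ⊤ := by
      rcases hirr (LinearMap.range φ) (by
        intro h v hv
        obtain ⟨w, rfl⟩ := hv
        exact ⟨Y.ρ h w, hcomm h w⟩) with hb | ht
      · exact absurd (LinearMap.range_eq_bot.mp hb) (fun h0 => hne (by
          apply Action.hom_ext; ext v; exact LinearMap.congr_fun h0 v))
      · exact ht
    set e : Y ≃ₗ[ℂ] X := LinearEquiv.ofBijective φ
      ⟨LinearMap.ker_eq_bot.mp hker, LinearMap.range_eq_top.mp hrange⟩ with he
    have hsymm : ∀ v : Y, e.symm (φ v) = v := fun v => e.symm_apply_apply v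
    set g : X ⟶ Y := ⟨FGModuleCat.ofHom (e.symm : X →ₗ[ℂ] Y), fun h => by
      ext x
      show e.symm ((X.ρ h : X →ₗ[ℂ] X) x) = (Y.ρ h : Y →ₗ[ℂ] Y) (e.symm x)
      obtain ⟨y, rfl⟩ := e.surjective x
      have hx : (e : Y → X) y = φ y := rfl
      rw [hx, ← hcomm h y, hsymm, hsymm]⟩ with hg
    refine ⟨⟨g, ?_, ?_⟩⟩
    · apply Action.hom_ext; ext v
      exact hsymm v
    · apply Action.hom_ext; ext v
      exact e.apply_symm_apply v

instance : Module.Finite ℂ (MonoidAlgebra ℂ H) := Module.Finite.of_basis (myBasis (H := H))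


theorem simple_of_irreducible' (M : Type) [AddCommGroup M] [Module ℂ M] [FiniteDimensional ℂ M]
    (ρ : Representation ℂ H M) (hnt : Nontrivial M)
    (hirr : ∀ q : Submodule ℂ M, (∀ (h : H), ∀ v ∈ q, ρ h v ∈ q) → q = ⊥ ∨ q = ⊤) :
    Simple (FDRep.of ρ) :=
  simple_of_irreducible (FDRep.of ρ) hnt hirr

theorem lmul_mapsTo (p : Submodule (MonoidAlgebra ℂ H) (MonoidAlgebra ℂ H)) (x : H) :
    Set.MapsTo (Lmul x) (p.restrictScalars ℂ : Set (MonoidAlgebra ℂ H))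
      (p.restrictScalars ℂ) :=
  fun v hv => p.smul_mem (MonoidAlgebra.of ℂ H x) hv

def ρsub (p : Submodule (MonoidAlgebra ℂ H) (MonoidAlgebra ℂ H)) :
    Representation ℂ H ↥(p.restrictScalars ℂ) where
  toFun x := (Lmul x).restrict (lmul_mapsTo p x)
  map_one' := by
    apply LinearMap.ext; intro v; apply Subtype.ext
    show Lmul 1 v.1 = v.1
    show MonoidAlgebra.of ℂ H 1 * v.1 = v.1
    rw [map_one, one_mul]
  map_mul' a b := by
    apply LinearMap.ext; intro v; apply Subtype.ext
    show Lmul (a * b) v.1 = Lmul a (Lmul b v.1)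
    show MonoidAlgebra.of ℂ H (a * b) * v.1
      = MonoidAlgebra.of ℂ H a * (MonoidAlgebra.of ℂ H b * v.1)
    rw [map_mul, mul_assoc]

def Wsub (p : Submodule (MonoidAlgebra ℂ H) (MonoidAlgebra ℂ H)) : FDRep ℂ H :=
  FDRep.of (ρsub p)

theorem Wsub_char (p : Submodule (MonoidAlgebra ℂ H) (MonoidAlgebra ℂ H)) (x : H) :
    (Wsub p).character x
      = LinearMap.trace ℂ ↥(p.restrictScalars ℂ) ((Lmul x).restrict (lmul_mapsTo p x)) := rfl

theorem Wsub_simple (p : Submodule (MonoidAlgebra ℂ H) (MonoidAlgebra ℂ H))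
    (hp : IsSimpleModule (MonoidAlgebra ℂ H) ↥p) : Simple (Wsub p) := by
  apply simple_of_irreducible'
  · -- Nontrivial
    have h1 : Nontrivial ↥p := IsSimpleModule.nontrivial (MonoidAlgebra ℂ H) ↥p
    obtain ⟨⟨u, hu⟩, ⟨w, hw⟩, huw⟩ := h1
    refine ⟨⟨u, hu⟩, ⟨w, hw⟩, fun hc => huw ?_⟩
    exact Subtype.ext (congrArg Subtype.val hc)
  · -- invariant subspaces
    intro q hq
    set q' : Submodule (MonoidAlgebra ℂ H) ↥p :=
      { carrier := {v : ↥p | (⟨v.1, v.2⟩ : ↥(p.restrictScalars ℂ)) ∈ q}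
        zero_mem' := q.zero_mem
        add_mem' := fun ha hb => q.add_mem ha hb
        smul_mem' := by
          intro a v hv
          induction a using MonoidAlgebra.induction_on with
          | of x => exact hq x ⟨v.1, v.2⟩ hv
          | add f g hf hg =>
              have h2 : ((f + g) • v : ↥p) = f • v + g • v := add_smul f g v
              rw [Set.mem_setOf_eq]
              rw [Set.mem_setOf_eq] at hf hg
              have h3 := q.add_mem hf hg
              convert h3 using 2 <;> rw [h2] <;> rfl
          | smul r f hf =>
              have h2 : ((r • f) • v : ↥p) = r • (f • v) := smul_assoc r f v
              rw [Set.mem_setOf_eq]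
              rw [Set.mem_setOf_eq] at hf
              have h3 := q.smul_mem r hf
              convert h3 using 2 <;> rw [h2] <;> rfl } with hq'
    rcases hp.1.eq_bot_or_eq_top q' with hb | ht
    · left
      rw [Submodule.eq_bot_iff]
      intro w hw
      have h4 : (⟨w.1, w.2⟩ : ↥p) ∈ q' := hw
      rw [hb] at h4
      have h0 : (⟨w.1, w.2⟩ : ↥p) = 0 := h4
      exact Subtype.ext (congrArg Subtype.val h0)
    · right
      rw [Submodule.eq_top_iff']
      intro w
      have h5 : (⟨w.1, w.2⟩ : ↥p) ∈ q' := ht ▸ Submodule.mem_top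
      exact h5

open scoped Classical in
/-- There is a finite family of irreducible characters (with multiplicity) summing to the
character of the regular representation. -/
theorem reg_decomp (ι : Type) [Fintype ι] (V : ι → FDRep ℂ H)
    (hcomplete : ∀ W : FDRep ℂ H, Simple W → ∃ i, Nonempty (W ≅ V i)) :
    ∃ (σ : Type) (_ : Fintype σ) (c : σ → ι), ∀ x : H,
      (if x = 1 then (Fintype.card H : ℂ) else 0) = ∑ k : σ, (V (c k)).character x := by
  classical
  letI : NeZero ((Fintype.card H : ℂ)) := ⟨by exact_mod_cast Fintype.card_ne_zero⟩
  obtain ⟨s, hind, hsup, hsimp⟩ :=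
    IsSemisimpleModule.exists_sSupIndep_sSup_simples_eq_top (MonoidAlgebra ℂ H)
      (MonoidAlgebra ℂ H)
  have hindep : iSupIndep (fun i : ↥s => (i : Submodule (MonoidAlgebra ℂ H) (MonoidAlgebra ℂ H))) :=
    (sSupIndep_iff s).mp hind
  haveI hNoeth : IsNoetherian (MonoidAlgebra ℂ H) (MonoidAlgebra ℂ H) :=
    isNoetherian_of_tower ℂ inferInstance
  have h1 : {i : ↥s | (i : Submodule (MonoidAlgebra ℂ H) (MonoidAlgebra ℂ H)) ≠ ⊥}.Finite :=
    Submodule.finite_ne_bot_of_iSupIndep hindep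
  have h2 : {i : ↥s | (i : Submodule (MonoidAlgebra ℂ H) (MonoidAlgebra ℂ H)) ≠ ⊥} = Set.univ := by
    refine Set.eq_univ_of_forall fun i => ?_
    haveI := hsimp _ i.2
    have hnt : Nontrivial ↥(i : Submodule (MonoidAlgebra ℂ H) (MonoidAlgebra ℂ H)) :=
      IsSimpleModule.nontrivial (MonoidAlgebra ℂ H) _
    intro hbot
    rw [hbot] at hnt
    obtain ⟨⟨a, ha⟩, ⟨b, hb⟩, hab⟩ := hnt
    exact hab (Subtype.ext ((Submodule.mem_bot _).mp ha |>.trans ((Submodule.mem_bot _).mp hb).symm))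
  haveI hfin : Finite ↥s := by
    rw [h2] at h1
    exact Set.finite_univ_iff.mp h1
  letI : Fintype ↥s := Fintype.ofFinite ↥s
  have hintA : DirectSum.IsInternal
      (fun i : ↥s => (i : Submodule (MonoidAlgebra ℂ H) (MonoidAlgebra ℂ H))) :=
    DirectSum.isInternal_submodule_of_iSupIndep_of_iSup_eq_top hindep
      (by rw [← sSup_eq_iSup']; exact hsup)
  set Nc : ↥s → Submodule ℂ (MonoidAlgebra ℂ H) :=
    fun i => (i : Submodule (MonoidAlgebra ℂ H) (MonoidAlgebra ℂ H)).restrictScalars ℂ with hNc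
  have hsupC : ⨆ i, Nc i = ⊤ := by
    refine le_antisymm le_top ?_
    intro v _
    have hv : v ∈ ⨆ i : ↥s, (i : Submodule (MonoidAlgebra ℂ H) (MonoidAlgebra ℂ H)) := by
      rw [← sSup_eq_iSup', hsup]; trivial
    exact Submodule.iSup_induction (motive := fun w => w ∈ ⨆ i, Nc i) _ hv
      (fun i w hw => Submodule.mem_iSup_of_mem i hw) (zero_mem _)
      (fun a b ha hb => add_mem ha hb)
  have hindepC : iSupIndep Nc := by
    intro i
    rw [Submodule.disjoint_def]
    intro x hx hx'
    have hle : (⨆ (j) (_ : j ≠ i), Nc j)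
        ≤ (⨆ (j) (_ : j ≠ i), (j : Submodule (MonoidAlgebra ℂ H) (MonoidAlgebra ℂ H))).restrictScalars ℂ := by
      refine iSup₂_le fun j hj => ?_
      intro w hw
      exact Submodule.mem_iSup_of_mem j (Submodule.mem_iSup_of_mem hj hw)
    exact Submodule.disjoint_def.mp (hindep i) x hx (hle hx')
  have hintC : DirectSum.IsInternal Nc :=
    DirectSum.isInternal_submodule_of_iSupIndep_of_iSup_eq_top hindepC hsupC
  have htr : ∀ x : H, LinearMap.trace ℂ (MonoidAlgebra ℂ H) (Lmul x)
      = ∑ i : ↥s, (Wsub (i : Submodule (MonoidAlgebra ℂ H) (MonoidAlgebra ℂ H))).character x := by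
    intro x
    rw [LinearMap.trace_eq_sum_trace_restrict hintC (fun i => lmul_mapsTo _ x)]
    exact Finset.sum_congr rfl fun i _ => (Wsub_char _ x).symm
  have hchoose : ∀ i : ↥s, ∃ j : ι,
      Nonempty ((Wsub (i : Submodule (MonoidAlgebra ℂ H) (MonoidAlgebra ℂ H))) ≅ V j) :=
    fun i => hcomplete _ (Wsub_simple _ (hsimp _ i.2))
  set c : ↥s → ι := fun i => (hchoose i).choose with hc
  refine ⟨↥s, inferInstance, c, fun x => ?_⟩
  rw [← trace_Lmul x, htr x]
  refine Finset.sum_congr rfl fun i _ => ?_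
  rw [FDRep.char_iso (hchoose i).choose_spec.some]

theorem alg_aux (n d x : ℂ) (hn : n ≠ 0) (hd : d ≠ 0) (k : ℕ) :
    n⁻¹ * (d * ((n ^ k * n) / (d ^ k * d) * x)) = n ^ k / d ^ k * x := by
  field_simp

open scoped Classical in
theorem orth (ι : Type) (V : ι → FDRep ℂ H) (hsimple : ∀ i, Simple (V i))
    (hdistinct : ∀ i j, i ≠ j → IsEmpty (V i ≅ V j)) (k j : ι) :
    ∑ x : H, (V k).character x * (V j).character x⁻¹
      = if k = j then (Fintype.card H : ℂ) else 0 := by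
  letI : Invertible ((Fintype.card H : ℂ)) :=
    invertibleOfNonzero (by exact_mod_cast Fintype.card_ne_zero)
  haveI := hsimple k; haveI := hsimple j
  have h := FDRep.char_orthonormal (G := H) (V k) (V j)
  rw [Nat.card_eq_fintype_card] at h
  have hn : (Fintype.card H : ℂ) ≠ 0 := by exact_mod_cast Fintype.card_ne_zero
  have h' : (Fintype.card H : ℂ)⁻¹ * ∑ x : H, (V k).character x * (V j).character x⁻¹
      = if Nonempty (V k ≅ V j) then 1 else 0 := by
    exact h
  have hiff : Nonempty (V k ≅ V j) ↔ k = j := by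
    constructor
    · intro hne
      by_contra hkj
      exact (hdistinct k j hkj).false hne.some
    · rintro rfl; exact ⟨Iso.refl _⟩
  have hS : ∑ x : H, (V k).character x * (V j).character x⁻¹
      = (Fintype.card H : ℂ) * (if Nonempty (V k ≅ V j) then 1 else 0) := by
    have h2' : (Fintype.card H : ℂ)
          * ((Fintype.card H : ℂ)⁻¹ * ∑ x : H, (V k).character x * (V j).character x⁻¹)
        = (Fintype.card H : ℂ) * (if Nonempty (V k ≅ V j) then 1 else 0) := by rw [h']
    rw [← mul_assoc, mul_inv_cancel₀ hn, one_mul] at h2'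
    exact h2'
  rw [hS]
  by_cases hkj : k = j
  · rw [if_pos hkj, if_pos (hiff.mpr hkj), mul_one]
  · rw [if_neg hkj, if_neg (fun hne => hkj (hiff.mp hne)), mul_zero]

open scoped Classical in
theorem reg_char (ι : Type) [Fintype ι] (V : ι → FDRep ℂ H)
    (hsimple : ∀ i, Simple (V i))
    (hdistinct : ∀ i j, i ≠ j → IsEmpty (V i ≅ V j))
    (hcomplete : ∀ W : FDRep ℂ H, Simple W → ∃ i, Nonempty (W ≅ V i)) (x : H) :
    (if x = 1 then (Fintype.card H : ℂ) else 0)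
      = ∑ j : ι, (V j).character 1 * (V j).character x := by
  obtain ⟨σ, hσ, c, hreg⟩ := reg_decomp ι V hcomplete
  have hn : (Fintype.card H : ℂ) ≠ 0 := by exact_mod_cast Fintype.card_ne_zero
  -- multiplicities
  have hmult : ∀ j : ι,
      ((Finset.univ.filter (fun k : σ => c k = j)).card : ℂ) = (V j).character 1 := by
    intro j
    have e1 : ∑ y : H, (if y = 1 then (Fintype.card H : ℂ) else 0) * (V j).character y⁻¹
        = (Fintype.card H : ℂ) * (V j).character 1 := by
      rw [Finset.sum_eq_single 1]
      · simp
      · intro y _ hy; rw [if_neg hy, zero_mul]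
      · intro hy; exact absurd (Finset.mem_univ 1) hy
    have e2 : ∑ y : H, (if y = 1 then (Fintype.card H : ℂ) else 0) * (V j).character y⁻¹
        = (Fintype.card H : ℂ)
            * ((Finset.univ.filter (fun k : σ => c k = j)).card : ℂ) := by
      calc ∑ y : H, (if y = 1 then (Fintype.card H : ℂ) else 0) * (V j).character y⁻¹
          = ∑ y : H, (∑ k : σ, (V (c k)).character y) * (V j).character y⁻¹ := by
            refine Finset.sum_congr rfl fun y _ => ?_; rw [← hreg y]
        _ = ∑ k : σ, ∑ y : H, (V (c k)).character y * (V j).character y⁻¹ := by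
            rw [Finset.sum_comm]
            exact Finset.sum_congr rfl fun y _ => Finset.sum_mul _ _ _
        _ = ∑ k : σ, if c k = j then (Fintype.card H : ℂ) else 0 := by
            exact Finset.sum_congr rfl fun k _ => orth ι V hsimple hdistinct (c k) j
        _ = ((Finset.univ.filter (fun k : σ => c k = j)).card : ℂ) * (Fintype.card H : ℂ) := by
            rw [← Finset.sum_filter, Finset.sum_const, nsmul_eq_mul]
        _ = _ := by ring
    have h3 := e1.symm.trans e2
    exact (mul_left_cancel₀ hn h3).symm
  -- group the sum by fibers
  rw [hreg x, ← Finset.sum_fiberwise Finset.univ c (fun k => (V (c k)).character x)]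
  refine Finset.sum_congr rfl fun j _ => ?_
  rw [← hmult j]
  have : ∀ k ∈ Finset.univ.filter (fun k : σ => c k = j),
      (V (c k)).character x = (V j).character x := by
    intro k hk
    rw [(Finset.mem_filter.mp hk).2]
  rw [Finset.sum_congr rfl this, Finset.sum_const, nsmul_eq_mul]

end Frob

open Frob in
theorem commutator_count_eq_char_sum
    (H : Type) [Group H] [Fintype H]
    (g : ℕ) (hg : 1 ≤ g)
    (ι : Type) [Fintype ι] (V : ι → FDRep ℂ H)
    (hsimple : ∀ i, Simple (V i))
    (hdistinct : ∀ i j, i ≠ j → IsEmpty (V i ≅ V j))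
    (hcomplete : ∀ W : FDRep ℂ H, Simple W → ∃ i, Nonempty (W ≅ V i))
    (z : H) :
    (Nat.card {t : (Fin g → H) × (Fin g → H) //
        (List.ofFn fun i => commutator' (t.1 i) (t.2 i)).prod = z} : ℂ)
      = ∑ i : ι,
          ((Fintype.card H : ℂ) ^ (2 * g - 1) / (V i).character 1 ^ (2 * g - 1)) *
            (V i).character z := by
  classical
  have hn : (Fintype.card H : ℂ) ≠ 0 := by exact_mod_cast Fintype.card_ne_zero
  set w : (Fin g → H) × (Fin g → H) → H :=
    fun t => (List.ofFn fun i => commutator' (t.1 i) (t.2 i)).prod with hw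
  have hcount : (Nat.card {t : (Fin g → H) × (Fin g → H) // w t = z} : ℂ)
      = ∑ t : (Fin g → H) × (Fin g → H), if w t = z then (1 : ℂ) else 0 := by
    rw [Nat.card_eq_fintype_card, Fintype.card_subtype, Finset.card_filter]
    push_cast
    exact Finset.sum_congr rfl fun t _ => by split <;> simp
  rw [hcount]
  have hterm : ∀ t : (Fin g → H) × (Fin g → H),
      (if w t = z then (1 : ℂ) else 0)
        = (Fintype.card H : ℂ)⁻¹
            * ∑ i : ι, (V i).character 1 * (V i).character (z * (w t)⁻¹) := by
    intro t
    rw [← reg_char ι V hsimple hdistinct hcomplete (z * (w t)⁻¹)]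
    have hiff : (z * (w t)⁻¹ = 1) ↔ (w t = z) := by
      rw [mul_inv_eq_one, eq_comm]
    by_cases hzw : w t = z
    · rw [if_pos hzw, if_pos (hiff.mpr hzw), inv_mul_cancel₀ hn]
    · rw [if_neg hzw, if_neg (fun hc => hzw (hiff.mp hc)), mul_zero]
  rw [Finset.sum_congr rfl fun t _ => hterm t]
  rw [← Finset.mul_sum, Finset.sum_comm]
  have hinner : ∀ i : ι, ∑ t : (Fin g → H) × (Fin g → H),
      (V i).character 1 * (V i).character (z * (w t)⁻¹)
      = (V i).character 1
          * (((Fintype.card H : ℂ) / (V i).character 1) ^ (2 * g) * (V i).character z) := by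
    intro i
    haveI := hsimple i
    rw [← Finset.mul_sum, tuple_sum (V i) g z]
  rw [Finset.sum_congr rfl fun i _ => hinner i, Finset.mul_sum]
  refine Finset.sum_congr rfl fun i _ => ?_
  haveI := hsimple i
  have hd : (V i).character 1 ≠ 0 := char_one_ne_zero (V i)
  have h2g : 2 * g = 2 * g - 1 + 1 := by omega
  rw [div_pow, h2g, pow_succ, pow_succ]
  exact alg_aux _ _ _ hn hd _

end
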